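/- For K > 0, let L₀^τ(K) ∈ ((1/(1+K))^{1/3}, 1) satisfy 2·I'(L₀^τ(K))/I(L₀^τ(K)) = (1+K)(L₀^τ(K))²/(1 - (1+K)(L₀^τ(K))³), where I(r) = √3·∫_r¹ dξ/√(1-ξ³). Then lim_{K→0⁺} L₀^τ(K) = 1 and lim_{K→0⁺} (L₀^τ)'(K) = -1/4. -/

import Mathlib

/-!
Since `Ifun = √3 J` with `J' r = -1 / √(1 - r³)`, the tangency condition says exactly
`psi (L K) = 1 / (1 + K)`, where `psi r = r³ - r² √(1 - r³) J r / 2`. The lower bound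
`L K > (1 + K)^(-1/3)` squeezes `L K → 1`. By l'Hôpital `J r / √(1 - r³) → 2/3` as `r → 1⁻`, hence
`psi' r → 4`: so `psi` is strictly increasing near `1`, `L` is continuous and differentiable as the
inverse of `psi` composed with `K ↦ 1 / (1 + K)`, and `L' K = -1 / ((1 + K)² psi' (L K)) → -1/4`.
-/

open intervalIntegral

noncomputable def Ifun : ℝ → ℝ :=
  fun r => Real.sqrt 3 * ∫ ξ in r..1, 1 / Real.sqrt (1 - ξ^3)

open MeasureTheory Set Filter Topology

theorem continuousAt_of_strictMonoOn_comp_eq {α β γ : Type*} [LinearOrder α] [TopologicalSpace α]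
    [OrderTopology α] [LinearOrder β] [TopologicalSpace β] [OrderClosedTopology β]
    [TopologicalSpace γ] {ψ : α → β} {φ : γ → β} {L : γ → α} {s : Set α} {x : γ}
    (hs : s.OrdConnected) (hψ : StrictMonoOn ψ s) (hφ : ContinuousAt φ x)
    (hL : ∀ᶠ y in 𝓝 x, L y ∈ s ∧ ψ (L y) = φ y) : ContinuousAt L x := by
  obtain ⟨hLx, hψx⟩ := hL.self_of_nhds
  refine tendsto_order.2 ⟨fun u hu => ?_, fun u hu => ?_⟩
  · by_cases hus : u ∈ s
    · filter_upwards [hL, hφ.eventually_const_lt (hψx ▸ hψ hus hLx hu)] with y hy hlt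
      exact (hψ.lt_iff_lt hus hy.1).1 (hy.2 ▸ hlt)
    · filter_upwards [hL] with y hy
      by_contra! h
      exact hus (hs.out hy.1 hLx ⟨h, hu.le⟩)
  · by_cases hus : u ∈ s
    · filter_upwards [hL, hφ.eventually_lt_const (hψx ▸ hψ hLx hus hu)] with y hy hlt
      exact (hψ.lt_iff_lt hy.1 hus).1 (hy.2 ▸ hlt)
    · filter_upwards [hL] with y hy
      by_contra! h
      exact hus (hs.out hLx hy.1 ⟨hu.le, h⟩)

noncomputable def J (r : ℝ) : ℝ := ∫ ξ in r..1, 1 / √(1 - ξ ^ 3)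

theorem Ifun_eq (r : ℝ) : Ifun r = √3 * J r := rfl

theorem one_div_sqrt_one_sub_cube_le {ξ : ℝ} (h0 : 0 ≤ ξ) (h1 : ξ ≤ 1) :
    1 / √(1 - ξ ^ 3) ≤ (1 - ξ) ^ (-(1 / 2) : ℝ) := by
  rcases h1.eq_or_lt with rfl | h1
  · norm_num
  have hξ : 0 < 1 - ξ := by linarith
  rw [Real.rpow_neg hξ.le, ← Real.sqrt_eq_rpow, one_div]
  exact inv_anti₀ (Real.sqrt_pos.2 hξ) (Real.sqrt_le_sqrt (by nlinarith [pow_le_one₀ h0 h1.le (n := 2)]))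

theorem intervalIntegrable_one_sub_rpow_neg_half (r : ℝ) :
    IntervalIntegrable (fun ξ : ℝ => (1 - ξ) ^ (-(1 / 2) : ℝ)) volume r 1 := by
  simpa using ((intervalIntegrable_rpow' (by norm_num) (a := 0) (b := 1 - r)).symm.comp_sub_left 1)

theorem intervalIntegrable_one_div_sqrt_one_sub_cube {r : ℝ} (h0 : 0 ≤ r) (h1 : r ≤ 1) :
    IntervalIntegrable (fun ξ : ℝ => 1 / √(1 - ξ ^ 3)) volume r 1 := by
  refine (intervalIntegrable_one_sub_rpow_neg_half r).mono_fun
    (by fun_prop : Measurable fun ξ : ℝ => 1 / √(1 - ξ ^ 3)).aestronglyMeasurable ?_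
  refine (ae_restrict_iff' measurableSet_uIoc).2 (Eventually.of_forall fun ξ hξ => ?_)
  rw [uIoc_of_le h1] at hξ
  have hξ0 : 0 ≤ ξ := h0.trans hξ.1.le
  simp only [Real.norm_eq_abs]
  rw [abs_of_nonneg (by positivity), abs_of_nonneg (Real.rpow_nonneg (by linarith [hξ.2]) _)]
  exact one_div_sqrt_one_sub_cube_le hξ0 hξ.2

theorem J_pos {r : ℝ} (h0 : 0 ≤ r) (h1 : r < 1) : 0 < J r :=
  intervalIntegral_pos_of_pos_on (intervalIntegrable_one_div_sqrt_one_sub_cube h0 h1.le)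
    (fun ξ hξ => by
      have : ξ ^ 3 < 1 := pow_lt_one₀ (h0.trans hξ.1.le) hξ.2 three_ne_zero
      have : 0 < 1 - ξ ^ 3 := by linarith
      positivity) h1

theorem hasDerivAt_J {r : ℝ} (h0 : 0 ≤ r) (h1 : r < 1) :
    HasDerivAt J (-(1 / √(1 - r ^ 3))) r := by
  have hr : 0 < 1 - r ^ 3 := by linarith [pow_lt_one₀ h0 h1 three_ne_zero]
  exact integral_hasDerivAt_left (intervalIntegrable_one_div_sqrt_one_sub_cube h0 h1.le)
    (by fun_prop : Measurable fun ξ : ℝ => 1 / √(1 - ξ ^ 3)).stronglyMeasurable.stronglyMeasurableAtFilter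
    (continuousAt_const.div (by fun_prop) (Real.sqrt_pos.2 hr).ne')

theorem continuousOn_J : ContinuousOn J (Icc 0 1) := by
  have h := (intervalIntegrable_iff_integrableOn_Icc_of_le zero_le_one).1
    (intervalIntegrable_one_div_sqrt_one_sub_cube le_rfl zero_le_one)
  rw [← uIcc_of_le zero_le_one] at h ⊢
  exact continuousOn_primitive_interval_left h

theorem hasDerivAt_sqrt_one_sub_cube {r : ℝ} (hr : r ^ 3 < 1) :
    HasDerivAt (fun x => √(1 - x ^ 3)) (-(3 * r ^ 2) / (2 * √(1 - r ^ 3))) r := by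
  convert ((hasDerivAt_pow 3 r).const_sub 1).sqrt (by linarith) using 1
  ring

theorem tendsto_J_div_sqrt_one_sub_cube :
    Tendsto (fun r => J r / √(1 - r ^ 3)) (𝓝[<] 1) (𝓝 (2 / 3)) := by
  have hcube {r : ℝ} (hr : r ∈ Ioo (0 : ℝ) 1) : 0 < 1 - r ^ 3 := by
    linarith [pow_lt_one₀ hr.1.le hr.2 three_ne_zero]
  refine HasDerivAt.lhopital_zero_left_on_Ioc zero_lt_one
    (fun r hr => hasDerivAt_J hr.1.le hr.2)
    (fun r hr => hasDerivAt_sqrt_one_sub_cube (by linarith [hcube hr]))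
    (continuousOn_J.mono Ioc_subset_Icc_self) (by fun_prop)
    (fun r hr => div_ne_zero (by nlinarith [hr.1]) (by positivity [hcube hr]))
    integral_same (by norm_num) ?_
  have hlim : Tendsto (fun r : ℝ => 2 / (3 * r ^ 2)) (𝓝[<] 1) (𝓝 (2 / 3)) := by
    have h : ContinuousAt (fun r : ℝ => 2 / (3 * r ^ 2)) 1 := by fun_prop (disch := norm_num)
    simpa using h.continuousWithinAt.tendsto
  refine hlim.congr' ?_
  filter_upwards [Ioo_mem_nhdsLT zero_lt_one] with r hr
  have hs : 0 < √(1 - r ^ 3) := Real.sqrt_pos.2 (hcube hr)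
  field_simp

noncomputable def psi (r : ℝ) : ℝ := r ^ 3 - r ^ 2 * √(1 - r ^ 3) * J r / 2

-- The derivative of `psi`, written through `J r / √(1 - r³)`, which has a finite limit at `1`.
noncomputable def psi' (r : ℝ) : ℝ :=
  7 / 2 * r ^ 2 + (3 / 4 * r ^ 4 - r * (1 - r ^ 3)) * (J r / √(1 - r ^ 3))

theorem hasDerivAt_psi {r : ℝ} (h0 : 0 ≤ r) (h1 : r < 1) : HasDerivAt psi (psi' r) r := by
  have hr : r ^ 3 < 1 := pow_lt_one₀ h0 h1 three_ne_zero
  have hs : 0 < √(1 - r ^ 3) := Real.sqrt_pos.2 (by linarith)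
  have hsq : √(1 - r ^ 3) ^ 2 = 1 - r ^ 3 := Real.sq_sqrt (by linarith)
  refine ((hasDerivAt_pow 3 r).sub ((((hasDerivAt_pow 2 r).mul
    (hasDerivAt_sqrt_one_sub_cube hr)).mul (hasDerivAt_J h0 h1)).div_const 2)).congr_deriv ?_
  simp only [psi']
  field_simp
  norm_num
  linear_combination (-16 * r * J r) * hsq

theorem tendsto_psi' : Tendsto psi' (𝓝[<] 1) (𝓝 4) := by
  have hpoly (p : ℝ → ℝ) (hp : Continuous p) : Tendsto p (𝓝[<] 1) (𝓝 (p 1)) :=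
    hp.continuousWithinAt.tendsto
  have := (hpoly (fun r => 7 / 2 * r ^ 2) (by fun_prop)).add
    ((hpoly (fun r => 3 / 4 * r ^ 4 - r * (1 - r ^ 3)) (by fun_prop)).mul
      tendsto_J_div_sqrt_one_sub_cube)
  norm_num at this
  exact this

theorem strictMonoOn_psi {a : ℝ} (ha : 0 ≤ a) (hpos : ∀ r ∈ Ioo a 1, 0 < psi' r) :
    StrictMonoOn psi (Ioo a 1) := by
  have hderiv : ∀ r ∈ Ioo a 1, HasDerivAt psi (psi' r) r :=
    fun r hr => hasDerivAt_psi (ha.trans hr.1.le) hr.2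
  refine strictMonoOn_of_hasDerivWithinAt_pos (f' := psi') (convex_Ioo a 1)
    (fun r hr => (hderiv r hr).continuousAt.continuousWithinAt) ?_ ?_ <;>
    simp only [interior_Ioo]
  exacts [fun r hr => (hderiv r hr).hasDerivWithinAt, hpos]

theorem psi_eq_of_tangency {K r : ℝ} (hK : 0 < K) (hr : r ∈ Ioo ((1 / (1 + K)) ^ ((1 : ℝ) / 3)) 1)
    (htan : 2 * deriv Ifun r / Ifun r = (1 + K) * r ^ 2 / (1 - (1 + K) * r ^ 3)) :
    psi r = 1 / (1 + K) := by
  have hr0 : 0 < r := lt_of_le_of_lt (by positivity) hr.1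
  have hcube : 1 / (1 + K) < r ^ 3 := by
    calc 1 / (1 + K) = ((1 / (1 + K)) ^ ((1 : ℝ) / 3)) ^ 3 := by
          rw [← Real.rpow_natCast, ← Real.rpow_mul (by positivity)]; norm_num
      _ < r ^ 3 := by gcongr; exact hr.1
  have hden : 1 - (1 + K) * r ^ 3 ≠ 0 := by
    rw [div_lt_iff₀ (by positivity)] at hcube
    linarith
  have hs : 0 < √(1 - r ^ 3) := Real.sqrt_pos.2 (by linarith [pow_lt_one₀ hr0.le hr.2 three_ne_zero])
  have hJ : 0 < J r := J_pos hr0.le hr.2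
  have hI : deriv Ifun r = √3 * -(1 / √(1 - r ^ 3)) :=
    ((hasDerivAt_J hr0.le hr.2).const_mul √3).deriv
  rw [hI, Ifun_eq, div_eq_div_iff (by positivity) hden] at htan
  unfold psi
  field_simp
  field_simp at htan
  linear_combination htan

theorem hasDerivAt_of_psi_comp_eq {L : ℝ → ℝ} {a K₀ : ℝ} (ha : 0 ≤ a)
    (hpos : ∀ r ∈ Ioo a 1, 0 < psi' r) (hK₀ : 1 + K₀ ≠ 0)
    (hL : ∀ᶠ K in 𝓝 K₀, L K ∈ Ioo a 1 ∧ psi (L K) = 1 / (1 + K)) :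
    HasDerivAt L (-1 / ((1 + K₀) ^ 2 * psi' (L K₀))) K₀ := by
  obtain ⟨hLa, hψ⟩ := hL.self_of_nhds
  have hcont : ContinuousAt L K₀ :=
    continuousAt_of_strictMonoOn_comp_eq ordConnected_Ioo (strictMonoOn_psi ha hpos)
      (continuousAt_const.div (by fun_prop) hK₀) hL
  have hψ0 : psi (L K₀) ≠ 0 := by simpa [hψ] using hK₀
  have hψ' : 0 < psi' (L K₀) := hpos _ hLa
  -- `r ↦ 1 / psi r - 1` is a local left inverse of `L`.
  have hinv := ((hasDerivAt_psi (ha.trans hLa.1.le) hLa.2).inv hψ0).sub_const 1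
  refine (hinv.of_local_left_inverse hcont
    (div_ne_zero (neg_ne_zero.2 hψ'.ne') (pow_ne_zero 2 hψ0)) ?_).congr_deriv ?_
  · filter_upwards [hL] with K hK
    simp [hK.2]
  · rw [hψ]
    field_simp

theorem exists_psi'_pos : ∃ a ∈ Ico (0 : ℝ) 1, ∀ r ∈ Ioo a 1, 0 < psi' r := by
  obtain ⟨a, ha, hsub⟩ :=
    mem_nhdsLT_iff_exists_Ioo_subset.1 (tendsto_psi'.eventually_const_lt four_pos)
  exact ⟨max a 0, ⟨le_max_right _ _, max_lt ha one_pos⟩,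
    fun r hr => hsub ⟨(le_max_left _ _).trans_lt hr.1, hr.2⟩⟩

theorem tendsto_one_div_one_add_rpow_nhdsGT_zero (p : ℝ) (hp : 0 ≤ p) :
    Tendsto (fun K : ℝ => (1 / (1 + K)) ^ p) (𝓝[>] 0) (𝓝 1) := by
  have h : ContinuousAt (fun K : ℝ => (1 / (1 + K)) ^ p) 0 :=
    ((continuousAt_const.div (by fun_prop) (by norm_num)).rpow_const (Or.inr hp))
  simpa using h.continuousWithinAt.tendsto

theorem stmt_18 (L : ℝ → ℝ)
    (hL : ∀ K : ℝ, 0 < K →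
      L K ∈ Set.Ioo ((1/(1+K)) ^ ((1:ℝ)/3)) 1 ∧
      2 * deriv Ifun (L K) / Ifun (L K) =
        (1+K) * (L K)^2 / (1 - (1+K) * (L K)^3)) :
    Filter.Tendsto L (nhdsWithin 0 (Set.Ioi 0)) (nhds 1) ∧
      Filter.Tendsto (deriv L) (nhdsWithin 0 (Set.Ioi 0)) (nhds (-1/4)) := by
  have hψL (K : ℝ) (hK : 0 < K) : psi (L K) = 1 / (1 + K) :=
    psi_eq_of_tangency hK (hL K hK).1 (hL K hK).2
  have hlim : Tendsto L (𝓝[>] 0) (𝓝 1) :=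
    tendsto_of_tendsto_of_tendsto_of_le_of_le'
      (tendsto_one_div_one_add_rpow_nhdsGT_zero _ (by norm_num)) tendsto_const_nhds
      (eventually_nhdsWithin_of_forall fun K hK => (hL K hK).1.1.le)
      (eventually_nhdsWithin_of_forall fun K hK => (hL K hK).1.2.le)
  have hlim' : Tendsto L (𝓝[>] 0) (𝓝[<] 1) :=
    tendsto_nhdsWithin_iff.2 ⟨hlim, eventually_nhdsWithin_of_forall fun K hK => (hL K hK).1.2⟩
  refine ⟨hlim, ?_⟩
  obtain ⟨a, ⟨ha0, ha1⟩, hpos⟩ := exists_psi'_pos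
  obtain ⟨δ, hδ, hLδ⟩ := mem_nhdsGT_iff_exists_Ioo_subset.1 (hlim'.eventually (Ioo_mem_nhdsLT ha1))
  have hderiv (K : ℝ) (hK : K ∈ Ioo 0 δ) : HasDerivAt L (-1 / ((1 + K) ^ 2 * psi' (L K))) K := by
    refine hasDerivAt_of_psi_comp_eq ha0 hpos (by linarith [hK.1]) ?_
    filter_upwards [Ioo_mem_nhds hK.1 hK.2] with K' hK' using ⟨hLδ hK', hψL K' hK'.1⟩
  have hlimit : Tendsto (fun K => -1 / ((1 + K) ^ 2 * psi' (L K))) (𝓝[>] 0) (𝓝 (-1 / 4)) := by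
    have h : Tendsto (fun K : ℝ => (1 + K) ^ 2) (𝓝[>] 0) (𝓝 1) := by
      have hc : Continuous fun K : ℝ => (1 + K) ^ 2 := by fun_prop
      simpa using hc.continuousWithinAt.tendsto (x := 0) (s := Ioi 0)
    have := (tendsto_const_nhds (x := (-1 : ℝ))).div (h.mul (tendsto_psi'.comp hlim'))
      (by norm_num)
    rwa [one_mul] at this
  exact hlimit.congr' (by
    filter_upwards [Ioo_mem_nhdsGT hδ] with K hK using ((hderiv K hK).deriv).symm)
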